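/- arXiv:1702.04551 — 9 statements merged into one kernel-verified Lean document; each statement's English description precedes it below -/
import Mathlib

section
/- Let Γ : Set X → Set X be a monotone derivability operator (S ⊆ T implies Γ S ⊆ Γ T). Then every terminal natural induction of Γ from ∅ has as its limit the least structure that is saturated under Γ, i.e., the least S ⊆ X with Γ S ⊆ S; in particular, all terminal natural inductions of Γ from ∅ converge to the same limit. -/
universe u

variable {X : Type u}

/-- A natural induction of derivability operator `Γ` from structure `B` of length `β`. -/
def IsNatInd (Γ : Set X → Set X) (B : Set X) (β : Ordinal.{u}) (f : Ordinal.{u} → Set X) : Prop :=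
  f 0 = B ∧
  (∀ α : Ordinal.{u}, α + 1 ≤ β → f α ⊆ f (α + 1) ∧ f (α + 1) \ f α ⊆ Γ (f α)) ∧
  ∀ lam : Ordinal.{u}, lam ≤ β → Order.IsSuccLimit lam → f lam = ⋃ α < lam, f α

/-- `S` is saturated (closed) under `Γ`. -/
def Saturated (Γ : Set X → Set X) (S : Set X) : Prop := Γ S ⊆ S

/-- `S` is saturated on the set `T` of atoms. -/
def SaturatedOn (Γ : Set X → Set X) (S T : Set X) : Prop := Γ S ∩ T ⊆ S

/-- The set of atoms safely derivable from `S`. -/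
def SafeSet (Γ : Set X → Set X) (S : Set X) : Set X :=
  {A | A ∈ Γ S ∧ ∀ (β : Ordinal.{u}) (g : Ordinal.{u} → Set X), IsNatInd Γ S β g → A ∈ Γ (g β)}

/-- The set of atoms strictly underivable from `S`. -/
def UnderivSet (Γ : Set X → Set X) (S : Set X) : Set X :=
  {A | ∀ (β : Ordinal.{u}) (g : Ordinal.{u} → Set X), IsNatInd Γ S β g → A ∉ Γ (g β)}

/-- The structure `T` is safely derivable from the structure `S`. -/
def SafeStep (Γ : Set X → Set X) (S T : Set X) : Prop := S ⊆ T ∧ T ⊆ S ∪ SafeSet Γ S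

/-- A safe natural induction. -/
def IsSafeInd (Γ : Set X → Set X) (B : Set X) (β : Ordinal.{u}) (f : Ordinal.{u} → Set X) : Prop :=
  IsNatInd Γ B β f ∧ ∀ α : Ordinal.{u}, α + 1 ≤ β → SafeStep Γ (f α) (f (α + 1))

/-- A safe-terminal natural induction. -/
def IsSafeTermInd (Γ : Set X → Set X) (B : Set X) (β : Ordinal.{u}) (f : Ordinal.{u} → Set X) : Prop :=
  IsSafeInd Γ B β f ∧ SafeSet Γ (f β) ⊆ f β

/-- `A ≺_∝ B` iff `A ∝ B` and not `B ∝ A`. -/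
def Prec (r : X → X → Prop) (A B : X) : Prop := r A B ∧ ¬ r B A

/-- `r` is a dependency relation of `Γ`. -/
def IsDep (Γ : Set X → Set X) (r : X → X → Prop) : Prop :=
  ∀ (A : X) (S T : Set X), S ∩ {B | r B A} = T ∩ {B | r B A} → (A ∈ Γ S ↔ A ∈ Γ T)

/-- `r` is a monotone dependency relation of `Γ`. -/
def IsMonDep (Γ : Set X → Set X) (r : X → X → Prop) : Prop :=
  ∀ (A : X) (S T : Set X), S ∩ {B | Prec r B A} = T ∩ {B | Prec r B A} →
    S ∩ {B | r B A} ⊆ T ∩ {B | r B A} → A ∈ Γ S → A ∈ Γ T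

/-- `r` monotonically orders `Γ`. -/
def MonOrders (Γ : Set X → Set X) (r : X → X → Prop) : Prop :=
  Transitive r ∧ WellFounded (Prec r) ∧ IsMonDep Γ r

/-- `r` strictly orders `Γ`. -/
def StrictOrders (Γ : Set X → Set X) (r : X → X → Prop) : Prop :=
  Transitive r ∧ Irreflexive r ∧ WellFounded r ∧ IsDep Γ r

/-- The natural induction `f` respects the relation `s`: an atom `A` may be derived at stage `α`
only if `f α` is saturated on `{B | s B A}`. -/
def Respects (Γ : Set X → Set X) (β : Ordinal.{u}) (f : Ordinal.{u} → Set X)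
    (s : X → X → Prop) : Prop :=
  ∀ α : Ordinal.{u}, α + 1 ≤ β → ∀ A ∈ f (α + 1) \ f α, SaturatedOn Γ (f α) {B | s B A}


theorem natind_subset_of_saturated (Γ : Set X → Set X)
    (hmono : ∀ S T : Set X, S ⊆ T → Γ S ⊆ Γ T)
    (β : Ordinal.{u}) (f : Ordinal.{u} → Set X) (hni : IsNatInd Γ ∅ β f)
    (S : Set X) (hS : Saturated Γ S) : ∀ α ≤ β, f α ⊆ S := by
  obtain ⟨h0, hsucc, hlim⟩ := hni
  intro α
  induction α using Ordinal.induction with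
  | h α ih =>
    intro hα
    rcases Ordinal.zero_or_succ_or_isSuccLimit α with h | ⟨γ, rfl⟩ | h
    · subst h; rw [h0]; exact Set.empty_subset S
    · rw [← Ordinal.add_one_eq_succ] at *
      have := Ordinal.add_one_eq_succ γ
      have hγ : γ < γ + 1 := Order.lt_succ γ
      have hγβ := ih γ hγ (le_trans hγ.le hα)
      intro x hx
      by_cases hxγ : x ∈ f γ
      · exact hγβ hxγ
      · exact hS (hmono _ _ hγβ ((hsucc γ hα).2 ⟨hx, hxγ⟩))
    · rw [hlim α hα h]
      intro x hx
      simp only [Set.mem_iUnion] at hx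
      obtain ⟨γ, hγ, hx⟩ := hx
      exact ih γ hγ (le_trans hγ.le hα) hx

/-- for a monotone operator, the limit of every terminal natural induction from
`∅` is the least saturated structure; in particular all such limits coincide. -/
theorem stmt1 (Γ : Set X → Set X) (hmono : ∀ S T : Set X, S ⊆ T → Γ S ⊆ Γ T)
    (β : Ordinal.{u}) (f : Ordinal.{u} → Set X)
    (hni : IsNatInd Γ ∅ β f) (hterm : Saturated Γ (f β)) :
    IsLeast {S : Set X | Saturated Γ S} (f β) ∧
      ∀ (β' : Ordinal.{u}) (f' : Ordinal.{u} → Set X),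
        IsNatInd Γ ∅ β' f' → Saturated Γ (f' β') → f' β' = f β := by
  have least : IsLeast {S : Set X | Saturated Γ S} (f β) :=
    ⟨hterm, fun S hS => natind_subset_of_saturated Γ hmono β f hni S hS β le_rfl⟩
  refine ⟨least, fun β' f' hni' hterm' => ?_⟩
  exact subset_antisymm (natind_subset_of_saturated Γ hmono β' f' hni' _ hterm β' le_rfl)
    (natind_subset_of_saturated Γ hmono β f hni _ hterm' β le_rfl)
end

section
/- Let Γ : Set X → Set X be a derivability operator and suppose the binary relation ∝ monotonically orders Γ. Then every natural induction of Γ from ∅ that respects ∝ also follows ∝: for all atoms A, B derived by the induction with A ≺_∝ B, the stage at which A is derived is strictly smaller than the stage at which B is derived. -/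
universe u

variable {X : Type u}

/-- a natural induction from `∅` that respects a monotonically ordering relation
`r` also follows it: atoms strictly lower in `≺_r` are derived at strictly earlier stages. -/
theorem stmt6 (Γ : Set X → Set X) (r : X → X → Prop) (hmo : MonOrders Γ r)
    (β : Ordinal.{u}) (f : Ordinal.{u} → Set X)
    (hni : IsNatInd Γ ∅ β f) (hresp : Respects Γ β f (Prec r)) :
    ∀ (i j : Ordinal.{u}) (A B : X), i + 1 ≤ β → j + 1 ≤ β →
      A ∈ f (i + 1) \ f i → B ∈ f (j + 1) \ f j → Prec r A B → i < j := by
  obtain ⟨htrans, _hwf, hdep⟩ := hmo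
  -- monotonicity of f
  have hmono : ∀ δ : Ordinal.{u}, δ ≤ β → ∀ γ ≤ δ, f γ ⊆ f δ := by
    intro δ
    induction δ using Ordinal.induction with
    | _ δ ih =>
      intro hδβ γ hγδ
      rcases Ordinal.zero_or_succ_or_isSuccLimit δ with h0 | ⟨ε, hε⟩ | hlim
      · subst h0
        have : γ = 0 := le_antisymm hγδ (zero_le (a := γ))
        subst this; exact subset_rfl
      · rw [← Ordinal.add_one_eq_succ] at hε
        subst hε
        rcases eq_or_lt_of_le hγδ with heq | hlt
        · subst heq; exact subset_rfl
        · have hγε : γ ≤ ε := by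
            rw [Ordinal.add_one_eq_succ] at hlt
            exact Order.lt_succ_iff.mp hlt
          have hεlt : ε < ε + 1 := by
            rw [Ordinal.add_one_eq_succ]; exact Order.lt_succ ε
          have h1 : f γ ⊆ f ε := ih ε hεlt (le_trans (le_of_lt hεlt) hδβ) γ hγε
          exact h1.trans (hni.2.1 ε hδβ).1
      · rcases eq_or_lt_of_le hγδ with heq | hlt
        · subst heq; exact subset_rfl
        · rw [hni.2.2 δ hδβ hlim]
          intro x hx
          exact Set.mem_biUnion hlt hx
  intro i j A B hi hj hA hB hAB
  by_contra hij
  have hji : j ≤ i := le_of_not_gt hij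
  have hsat : SaturatedOn Γ (f j) {C | Prec r C B} := hresp j hj B hB
  -- key fact: anything r-below something ≺ B is itself ≺ B
  have key : ∀ D C : X, r D C → Prec r C B → Prec r D B := by
    intro D C hDC hCB
    refine ⟨htrans hDC hCB.1, fun hBD => hCB.2 (htrans hBD hDC)⟩
  have keyA : ∀ D : X, r D A → Prec r D B := by
    intro D hDA
    exact ⟨htrans hDA hAB.1, fun hBD => hAB.2 (htrans hBD hDA)⟩
  -- E: for j ≤ α ≤ β, f α agrees with f j on {C | Prec r C B}
  have E : ∀ α : Ordinal.{u}, α ≤ β → j ≤ α →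
      f α ∩ {C | Prec r C B} = f j ∩ {C | Prec r C B} := by
    intro α
    induction α using Ordinal.induction with
    | _ α ih =>
      intro hαβ hjα
      rcases eq_or_lt_of_le hjα with heq | hlt
      · rw [heq]
      · rcases Ordinal.zero_or_succ_or_isSuccLimit α with h0 | ⟨ε, hε⟩ | hlim
        · subst h0; exact absurd hlt (not_lt_zero (a := j))
        · rw [← Ordinal.add_one_eq_succ] at hε
          subst hε
          have hjε : j ≤ ε := by
            rw [Ordinal.add_one_eq_succ] at hlt
            exact Order.lt_succ_iff.mp hlt
          have hεlt : ε < ε + 1 := by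
            rw [Ordinal.add_one_eq_succ]; exact Order.lt_succ ε
          have hεβ : ε ≤ β := le_trans (le_of_lt hεlt) hαβ
          have hEε := ih ε hεlt hεβ hjε
          apply Set.Subset.antisymm
          · rintro C ⟨hCα, hCB⟩
            by_cases hCε : C ∈ f ε
            · have : C ∈ f ε ∩ {C | Prec r C B} := ⟨hCε, hCB⟩
              rw [hEε] at this
              exact this
            · have hCΓ : C ∈ Γ (f ε) := (hni.2.1 ε hαβ).2 ⟨hCα, hCε⟩
              have hCΓj : C ∈ Γ (f j) := by
                refine hdep C (f ε) (f j) ?_ ?_ hCΓ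
                · ext D
                  constructor
                  · rintro ⟨hD, hDC⟩
                    have hDB : Prec r D B := key D C hDC.1 hCB
                    have : D ∈ f ε ∩ {C | Prec r C B} := ⟨hD, hDB⟩
                    rw [hEε] at this
                    exact ⟨this.1, hDC⟩
                  · rintro ⟨hD, hDC⟩
                    have hDB : Prec r D B := key D C hDC.1 hCB
                    have : D ∈ f j ∩ {C | Prec r C B} := ⟨hD, hDB⟩
                    rw [← hEε] at this
                    exact ⟨this.1, hDC⟩
                · rintro D ⟨hD, hDC⟩
                  have hDB : Prec r D B := key D C hDC hCB
                  have : D ∈ f ε ∩ {C | Prec r C B} := ⟨hD, hDB⟩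
                  rw [hEε] at this
                  exact ⟨this.1, hDC⟩
              exact ⟨hsat ⟨hCΓj, hCB⟩, hCB⟩
          · rintro C ⟨hCj, hCB⟩
            exact ⟨hmono (ε + 1) hαβ j hjα hCj, hCB⟩
        · rw [hni.2.2 α hαβ hlim]
          apply Set.Subset.antisymm
          · rintro C ⟨hCα, hCB⟩
            simp only [Set.mem_iUnion] at hCα
            obtain ⟨δ, hδα, hCδ⟩ := hCα
            rcases le_or_gt δ j with hδj | hjδ
            · exact ⟨hmono j (le_trans (le_of_lt hlt) hαβ) δ hδj hCδ, hCB⟩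
            · have := ih δ hδα (le_trans (le_of_lt hδα) hαβ) (le_of_lt hjδ)
              have hmem : C ∈ f δ ∩ {C | Prec r C B} := ⟨hCδ, hCB⟩
              rw [this] at hmem
              exact hmem
          · rintro C ⟨hCj, hCB⟩
            refine ⟨?_, hCB⟩
            simp only [Set.mem_iUnion]
            exact ⟨j, hlt, hCj⟩
  have hiβ : i ≤ β := le_trans (le_of_lt (by rw [Ordinal.add_one_eq_succ]; exact Order.lt_succ i)) hi
  have hEi := E i hiβ hji
  have hAΓ : A ∈ Γ (f i) := (hni.2.1 i hi).2 hA
  have hAΓj : A ∈ Γ (f j) := by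
    refine hdep A (f i) (f j) ?_ ?_ hAΓ
    · ext D
      constructor
      · rintro ⟨hD, hDA⟩
        have hDB : Prec r D B := keyA D hDA.1
        have : D ∈ f i ∩ {C | Prec r C B} := ⟨hD, hDB⟩
        rw [hEi] at this
        exact ⟨this.1, hDA⟩
      · rintro ⟨hD, hDA⟩
        have hDB : Prec r D B := keyA D hDA.1
        have : D ∈ f j ∩ {C | Prec r C B} := ⟨hD, hDB⟩
        rw [← hEi] at this
        exact ⟨this.1, hDA⟩
    · rintro D ⟨hD, hDA⟩
      have hDB : Prec r D B := keyA D hDA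
      have : D ∈ f i ∩ {C | Prec r C B} := ⟨hD, hDB⟩
      rw [hEi] at this
      exact ⟨this.1, hDA⟩
  have hAj : A ∈ f j := hsat ⟨hAΓj, hAB⟩
  exact hA.2 (hmono i hiβ j hji hAj)
end

section
/- Let Γ : Set X → Set X be a derivability operator and suppose the binary relation ∝ monotonically orders Γ. Then: (1) there exists a terminal natural induction of Γ from ∅ that respects ∝; (2) any two terminal natural inductions of Γ from ∅ that respect ∝ have the same limit; and (3) this common limit equals the limit of every safe-terminal natural induction of Γ from ∅ (hence is independent of the choice of ∝). -/
universe u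

variable {X : Type u}

section Stmt7Aux

variable {X : Type u}

lemma prec_of_r {r : X → X → Prop} (hr : Transitive r) {A C D : X}
    (h : Prec r C A) (hD : r D C) : Prec r D A :=
  ⟨hr hD h.1, fun hAD => h.2 (hr hAD hD)⟩

lemma cluster_prec_iff {r : X → X → Prop} (hr : Transitive r) {A B : X}
    (h1 : r B A) (h2 : r A B) (C : X) : Prec r C B ↔ Prec r C A :=
  ⟨fun h => ⟨hr h.1 h1, fun hAC => h.2 (hr h1 hAC)⟩,
   fun h => ⟨hr h.1 h2, fun hBC => h.2 (hr h2 hBC)⟩⟩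

lemma cluster_r_iff {r : X → X → Prop} (hr : Transitive r) {A B : X}
    (h1 : r B A) (h2 : r A B) (C : X) : r C B ↔ r C A :=
  ⟨fun h => hr h h1, fun h => hr h h2⟩

lemma natind_mono {Γ : Set X → Set X} {B : Set X} {β : Ordinal.{u}} {f : Ordinal.{u} → Set X}
    (hf : IsNatInd Γ B β f) : ∀ γ ≤ β, ∀ α ≤ γ, f α ⊆ f γ := by
  intro γ
  induction γ using Ordinal.induction with
  | h γ IH =>
    intro hγβ α hαγ
    rcases Ordinal.zero_or_succ_or_isSuccLimit γ with rfl | ⟨δ, rfl⟩ | hlim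
    · obtain rfl := nonpos_iff_eq_zero.mp hαγ; exact subset_rfl
    · rw [← Ordinal.add_one_eq_succ] at *
      rcases eq_or_lt_of_le hαγ with rfl | hlt
      · exact subset_rfl
      · have hαδ : α ≤ δ := by
          rwa [Ordinal.add_one_eq_succ, Order.lt_succ_iff] at hlt
        have hδ : δ < δ + 1 := by
          rw [Ordinal.add_one_eq_succ]; exact Order.lt_succ δ
        exact (IH δ hδ (le_trans (le_of_lt hδ) hγβ) α hαδ).trans (hf.2.1 δ hγβ).1
    · rcases eq_or_lt_of_le hαγ with rfl | hlt
      · exact subset_rfl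
      · rw [hf.2.2 γ hγβ hlim]
        exact fun x hx => Set.mem_biUnion hlt hx

lemma natind_prec_stable {Γ : Set X → Set X} {r : X → X → Prop}
    (hr : Transitive r) (hmd : IsMonDep Γ r)
    {B : Set X} {β : Ordinal.{u}} {f : Ordinal.{u} → Set X} (hf : IsNatInd Γ B β f)
    {A : X} {α : Ordinal.{u}} (hαβ : α ≤ β)
    (hsat : SaturatedOn Γ (f α) {C | Prec r C A}) :
    ∀ δ ≤ β, f δ ∩ {C | Prec r C A} ⊆ f α := by
  intro δ
  induction δ using Ordinal.induction with
  | h δ IH =>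
    intro hδβ
    rcases le_or_gt δ α with hle | hgt
    · exact fun C hC => natind_mono hf α hαβ δ hle hC.1
    rcases Ordinal.zero_or_succ_or_isSuccLimit δ with rfl | ⟨δ', rfl⟩ | hlim
    · exact absurd hgt (not_lt_zero (a := α))
    · rw [← Ordinal.add_one_eq_succ] at *
      have hlt : δ' < δ' + 1 := by
        rw [Ordinal.add_one_eq_succ]; exact Order.lt_succ δ'
      have hδ'β : δ' ≤ β := le_trans (le_of_lt hlt) hδβ
      have hαδ' : α ≤ δ' := by
        rw [Ordinal.add_one_eq_succ, Order.lt_succ_iff] at hgt; exact hgt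
      rintro C ⟨hC1, hC2⟩
      by_cases hCδ : C ∈ f δ'
      · exact IH δ' hlt hδ'β ⟨hCδ, hC2⟩
      · have hCΓ : C ∈ Γ (f δ') := (hf.2.1 δ' hδβ).2 ⟨hC1, hCδ⟩
        exfalso
        have hsub : f δ' ∩ {D | r D C} ⊆ f α ∩ {D | r D C} := by
          rintro D ⟨hD1, hD2⟩
          exact ⟨IH δ' hlt hδ'β ⟨hD1, prec_of_r hr hC2 hD2⟩, hD2⟩
        have heq : f δ' ∩ {D | Prec r D C} = f α ∩ {D | Prec r D C} := by
          apply Set.Subset.antisymm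
          · rintro D ⟨hD1, hD2⟩
            exact ⟨(hsub ⟨hD1, hD2.1⟩).1, hD2⟩
          · rintro D ⟨hD1, hD2⟩
            exact ⟨natind_mono hf δ' hδ'β α hαδ' hD1, hD2⟩
        have hCΓα : C ∈ Γ (f α) := hmd C (f δ') (f α) heq hsub hCΓ
        exact hCδ (natind_mono hf δ' hδ'β α hαδ' (hsat ⟨hCΓα, hC2⟩))
    · rintro C ⟨hC1, hC2⟩
      rw [hf.2.2 δ hδβ hlim] at hC1
      obtain ⟨γ, hγδ, hCγ⟩ := Set.mem_iUnion₂.mp hC1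
      exact IH γ hγδ (le_trans (le_of_lt hγδ) hδβ) ⟨hCγ, hC2⟩

lemma mem_safeSet_of_sat {Γ : Set X → Set X} {r : X → X → Prop}
    (hr : Transitive r) (hmd : IsMonDep Γ r) {T : Set X} {A : X}
    (hA : A ∈ Γ T) (hsat : SaturatedOn Γ T {C | Prec r C A}) :
    A ∈ SafeSet Γ T := by
  refine ⟨hA, fun β g hg => ?_⟩
  have h0 : g 0 = T := hg.1
  have hmono : T ⊆ g β := h0 ▸ natind_mono hg β le_rfl 0 (zero_le (a := β))
  have hstab : g β ∩ {C | Prec r C A} ⊆ T := by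
    have h' := natind_prec_stable hr hmd hg (α := 0) (zero_le (a := β))
      (by rwa [h0]) β le_rfl
    rwa [h0] at h'
  have heq : T ∩ {C | Prec r C A} = g β ∩ {C | Prec r C A} := by
    apply Set.Subset.antisymm
    · rintro C ⟨hC1, hC2⟩; exact ⟨hmono hC1, hC2⟩
    · rintro C ⟨hC1, hC2⟩; exact ⟨hstab ⟨hC1, hC2⟩, hC2⟩
  exact hmd A T (g β) heq (fun C hC => ⟨hmono hC.1, hC.2⟩) hA

/-- One canonical step. -/
def dstep (Γ : Set X → Set X) (r : X → X → Prop) (T : Set X) : Set X :=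
  T ∪ {A | A ∈ Γ T ∧ SaturatedOn Γ T {C | Prec r C A}}

/-- The canonical respectful induction from `S`. -/
def canon (Γ : Set X → Set X) (r : X → X → Prop) (S : Set X) (o : Ordinal.{u}) : Set X :=
  Ordinal.limitRecOn o S (fun _ ih => dstep Γ r ih)
    (fun o _ ih => ⋃ α, ⋃ (h : α < o), ih α h)

lemma canon_zero (Γ : Set X → Set X) (r : X → X → Prop) (S : Set X) :
    canon Γ r S 0 = S := by
  rw [canon, Ordinal.limitRecOn_zero]

lemma canon_succ (Γ : Set X → Set X) (r : X → X → Prop) (S : Set X) (α : Ordinal.{u}) :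
    canon Γ r S (α + 1) = dstep Γ r (canon Γ r S α) := by
  rw [canon, Ordinal.add_one_eq_succ, Ordinal.limitRecOn_succ, canon]

lemma canon_limit (Γ : Set X → Set X) (r : X → X → Prop) (S : Set X) {o : Ordinal.{u}}
    (h : Order.IsSuccLimit o) : canon Γ r S o = ⋃ α < o, canon Γ r S α := by
  rw [canon, Ordinal.limitRecOn_limit _ _ _ _ h]
  rfl

lemma canon_isNatInd (Γ : Set X → Set X) (r : X → X → Prop) (S : Set X) (β : Ordinal.{u}) :
    IsNatInd Γ S β (canon Γ r S) := by
  refine ⟨canon_zero Γ r S, fun α _ => ?_, fun lam _ hlim => canon_limit Γ r S hlim⟩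
  rw [canon_succ]
  refine ⟨Set.subset_union_left, ?_⟩
  rintro A ⟨hA1, hA2⟩
  rcases hA1 with h | h
  · exact absurd h hA2
  · exact h.1

lemma canon_respects (Γ : Set X → Set X) (r : X → X → Prop) (S : Set X) (β : Ordinal.{u}) :
    Respects Γ β (canon Γ r S) (Prec r) := by
  intro α _ A hA
  rw [canon_succ] at hA
  rcases hA.1 with h | h
  · exact absurd h hA.2
  · exact h.2

lemma canon_stab (Γ : Set X → Set X) (r : X → X → Prop) (S : Set X) :
    ∃ θ : Ordinal.{u}, canon Γ r S (θ + 1) = canon Γ r S θ := by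
  by_contra hcon
  push_neg at hcon
  have hmono : ∀ a b : Ordinal.{u}, a ≤ b → canon Γ r S a ⊆ canon Γ r S b :=
    fun a b hab => natind_mono (canon_isNatInd Γ r S b) b le_rfl a hab
  have hinj : Function.Injective (canon Γ r S) := by
    intro a b hab
    by_contra hne
    rcases lt_or_gt_of_ne hne with h | h
    · have h1 : a + 1 ≤ b := by
        rw [Ordinal.add_one_eq_succ]; exact Order.succ_le_of_lt h
      exact hcon a (Set.Subset.antisymm (hab ▸ hmono _ _ h1)
        (hmono a (a + 1) (le_of_lt (by rw [Ordinal.add_one_eq_succ]; exact Order.lt_succ a))))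
    · have h1 : b + 1 ≤ a := by
        rw [Ordinal.add_one_eq_succ]; exact Order.succ_le_of_lt h
      exact hcon b (Set.Subset.antisymm (hab ▸ hmono _ _ h1)
        (hmono b (b + 1) (le_of_lt (by rw [Ordinal.add_one_eq_succ]; exact Order.lt_succ b))))
  exact not_injective_of_ordinal _ hinj

lemma canon_saturated {Γ : Set X → Set X} {r : X → X → Prop}
    (hwf : WellFounded (Prec r)) {S : Set X} {θ : Ordinal.{u}}
    (hθ : canon Γ r S (θ + 1) = canon Γ r S θ) : Saturated Γ (canon Γ r S θ) := by
  intro A hA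
  by_contra hAn
  have hne : Set.Nonempty {A | A ∈ Γ (canon Γ r S θ) ∧ A ∉ canon Γ r S θ} := ⟨A, hA, hAn⟩
  obtain ⟨A₀, ⟨hA₀1, hA₀2⟩, hmin⟩ := hwf.has_min _ hne
  apply hA₀2
  rw [← hθ, canon_succ]
  right
  refine ⟨hA₀1, ?_⟩
  rintro C ⟨hC1, hC2⟩
  by_contra hCn
  exact hmin C ⟨hC1, hCn⟩ hC2

lemma key {Γ : Set X → Set X} {r : X → X → Prop}
    (hr : Transitive r) (hmd : IsMonDep Γ r)
    {Bf : Set X} {βf : Ordinal.{u}} {f : Ordinal.{u} → Set X}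
    (hf : IsNatInd Γ Bf βf f) (hresp : Respects Γ βf f (Prec r))
    {L' : Set X} (hsatL' : Saturated Γ L') (hbase : Bf ⊆ L') {A : X}
    (h1 : ∀ C, Prec r C A → C ∈ f βf → C ∈ L')
    (h2 : ∀ C, Prec r C A → C ∈ L' → C ∈ f βf) :
    ∀ α ≤ βf, ∀ B, (B = A ∨ (r B A ∧ r A B)) → B ∈ f α → B ∈ L' := by
  intro α
  induction α using Ordinal.induction with
  | h α IH =>
    intro hαβ B hB hBα
    rcases Ordinal.zero_or_succ_or_isSuccLimit α with rfl | ⟨δ, rfl⟩ | hlim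
    · exact hbase (hf.1 ▸ hBα)
    · rw [← Ordinal.add_one_eq_succ] at *
      have hlt : δ < δ + 1 := by
        rw [Ordinal.add_one_eq_succ]; exact Order.lt_succ δ
      have hδβ : δ ≤ βf := le_trans (le_of_lt hlt) hαβ
      by_cases hBδ : B ∈ f δ
      · exact IH δ hlt hδβ B hB hBδ
      have hBΓ : B ∈ Γ (f δ) := (hf.2.1 δ hαβ).2 ⟨hBα, hBδ⟩
      have hsatB : SaturatedOn Γ (f δ) {C | Prec r C B} := hresp δ hαβ B ⟨hBα, hBδ⟩
      have hsBA : {C | Prec r C B} = {C | Prec r C A} := by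
        rcases hB with rfl | ⟨hBA, hAB⟩
        · rfl
        · ext C; exact cluster_prec_iff hr hBA hAB C
      have hpBA : {C | r C B} = {C | r C A} := by
        rcases hB with rfl | ⟨hBA, hAB⟩
        · rfl
        · ext C; exact cluster_r_iff hr hBA hAB C
      rw [hsBA] at hsatB
      have hstab : f βf ∩ {C | Prec r C A} ⊆ f δ :=
        natind_prec_stable hr hmd hf hδβ hsatB βf le_rfl
      have heq : f δ ∩ {C | Prec r C B} = L' ∩ {C | Prec r C B} := by
        rw [hsBA]
        apply Set.Subset.antisymm
        · rintro C ⟨hC1, hC2⟩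
          exact ⟨h1 C hC2 (natind_mono hf βf le_rfl δ hδβ hC1), hC2⟩
        · rintro C ⟨hC1, hC2⟩
          exact ⟨hstab ⟨h2 C hC2 hC1, hC2⟩, hC2⟩
      have hpsub : f δ ∩ {C | r C B} ⊆ L' ∩ {C | r C B} := by
        rw [hpBA]
        rintro C ⟨hC1, hC2⟩
        refine ⟨?_, hC2⟩
        by_cases hAC : r A C
        · exact IH δ hlt hδβ C (Or.inr ⟨hC2, hAC⟩) hC1
        · exact h1 C ⟨hC2, hAC⟩ (natind_mono hf βf le_rfl δ hδβ hC1)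
      exact hsatL' (hmd B (f δ) L' heq hpsub hBΓ)
    · rw [hf.2.2 α hαβ hlim] at hBα
      obtain ⟨γ, hγα, hBγ⟩ := Set.mem_iUnion₂.mp hBα
      exact IH γ hγα (le_trans (le_of_lt hγα) hαβ) B hB hBγ

lemma limit_eq {Γ : Set X → Set X} {r : X → X → Prop} (hmo : MonOrders Γ r)
    {β : Ordinal.{u}} {f : Ordinal.{u} → Set X} (hf : IsNatInd Γ ∅ β f)
    (hrf : Respects Γ β f (Prec r)) (hsf : Saturated Γ (f β))
    {S : Set X} {β₂ : Ordinal.{u}} {h : Ordinal.{u} → Set X} (hh : IsNatInd Γ S β₂ h)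
    (hrh : Respects Γ β₂ h (Prec r)) (hsh : Saturated Γ (h β₂))
    (hSL : S ⊆ f β) : h β₂ = f β := by
  obtain ⟨hr, hwf, hmd⟩ := hmo
  have main : ∀ A, A ∈ f β ↔ A ∈ h β₂ := by
    intro A
    refine hwf.induction (C := fun A => (A ∈ f β ↔ A ∈ h β₂)) A ?_
    intro A IH
    constructor
    · intro hA
      exact key hr hmd hf hrf hsh (Set.empty_subset _)
        (fun C hC hCf => (IH C hC).mp hCf)
        (fun C hC hCL => (IH C hC).mpr hCL) β le_rfl A (Or.inl rfl) hA
    · intro hA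
      exact key hr hmd hh hrh hsf hSL
        (fun C hC hCh => (IH C hC).mpr hCh)
        (fun C hC hCL => (IH C hC).mp hCL) β₂ le_rfl A (Or.inl rfl) hA
  ext A
  exact (main A).symm

end Stmt7Aux

/-- for `r` monotonically ordering `Γ`: terminal natural inductions from `∅`
respecting `r` exist, any two have the same limit, and this limit equals the limit of every
safe-terminal natural induction from `∅` (hence is independent of `r`). -/
theorem stmt7 (Γ : Set X → Set X) (r : X → X → Prop) (hmo : MonOrders Γ r) :
    (∃ (β : Ordinal.{u}) (f : Ordinal.{u} → Set X),
        IsNatInd Γ ∅ β f ∧ Respects Γ β f (Prec r) ∧ Saturated Γ (f β)) ∧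
    (∀ (β : Ordinal.{u}) (f : Ordinal.{u} → Set X) (β' : Ordinal.{u}) (f' : Ordinal.{u} → Set X),
        IsNatInd Γ ∅ β f → Respects Γ β f (Prec r) → Saturated Γ (f β) →
        IsNatInd Γ ∅ β' f' → Respects Γ β' f' (Prec r) → Saturated Γ (f' β') →
        f β = f' β') ∧
    (∀ (β : Ordinal.{u}) (f : Ordinal.{u} → Set X) (β' : Ordinal.{u}) (f' : Ordinal.{u} → Set X),
        IsNatInd Γ ∅ β f → Respects Γ β f (Prec r) → Saturated Γ (f β) →
        IsSafeTermInd Γ ∅ β' f' → f β = f' β') := by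
  obtain ⟨hr, hwf, hmd⟩ := hmo
  have hex : ∀ S : Set X, ∃ θ : Ordinal.{u}, IsNatInd Γ S θ (canon Γ r S) ∧
      Respects Γ θ (canon Γ r S) (Prec r) ∧ Saturated Γ (canon Γ r S θ) := by
    intro S
    obtain ⟨θ, hθ⟩ := canon_stab Γ r S
    exact ⟨θ, canon_isNatInd Γ r S θ, canon_respects Γ r S θ, canon_saturated hwf hθ⟩
  refine ⟨?_, ?_, ?_⟩
  · obtain ⟨θ, h1, h2, h3⟩ := hex ∅
    exact ⟨θ, canon Γ r ∅, h1, h2, h3⟩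
  · intro β f β' f' hf hrf hsf hf' hrf' hsf'
    exact (limit_eq ⟨hr, hwf, hmd⟩ hf hrf hsf hf' hrf' hsf' (Set.empty_subset _)).symm
  · intro β f β' f' hf hrf hsf hst
    obtain ⟨⟨hf', hsafe⟩, hterm⟩ := hst
    have claim1 : ∀ γ ≤ β', f' γ ⊆ f β := by
      intro γ
      induction γ using Ordinal.induction with
      | h γ IH =>
        intro hγβ
        rcases Ordinal.zero_or_succ_or_isSuccLimit γ with rfl | ⟨δ, rfl⟩ | hlim
        · rw [hf'.1]; exact Set.empty_subset _
        · rw [← Ordinal.add_one_eq_succ] at *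
          have hlt : δ < δ + 1 := by
            rw [Ordinal.add_one_eq_succ]; exact Order.lt_succ δ
          have hIH : f' δ ⊆ f β := IH δ hlt (le_trans (le_of_lt hlt) hγβ)
          intro A hA
          by_cases hAδ : A ∈ f' δ
          · exact hIH hAδ
          have hAsafe : A ∈ SafeSet Γ (f' δ) := ((hsafe δ hγβ).2 hA).resolve_left hAδ
          obtain ⟨θ, hc1, hc2, hc3⟩ := hex (f' δ)
          have hlimeq : canon Γ r (f' δ) θ = f β :=
            limit_eq ⟨hr, hwf, hmd⟩ hf hrf hsf hc1 hc2 hc3 hIH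
          have hmem := hAsafe.2 θ _ hc1
          rw [hlimeq] at hmem
          exact hsf hmem
        · intro A hA
          rw [hf'.2.2 γ hγβ hlim] at hA
          obtain ⟨γ', hγ', hA⟩ := Set.mem_iUnion₂.mp hA
          exact IH γ' hγ' (le_trans (le_of_lt hγ') hγβ) hA
    have hL'L : f' β' ⊆ f β := claim1 β' le_rfl
    have claim2 : ∀ δ : Ordinal.{u}, canon Γ r (f' β') δ = f' β' := by
      intro δ
      induction δ using Ordinal.induction with
      | h δ IH =>
        rcases Ordinal.zero_or_succ_or_isSuccLimit δ with rfl | ⟨δ', rfl⟩ | hlim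
        · exact canon_zero Γ r (f' β')
        · rw [← Ordinal.add_one_eq_succ]
          have hlt : δ' < δ' + 1 := by
            rw [Ordinal.add_one_eq_succ]; exact Order.lt_succ δ'
          rw [canon_succ, IH δ' hlt]
          apply Set.Subset.antisymm
          · rintro A (hA | ⟨hA1, hA2⟩)
            · exact hA
            · exact hterm (mem_safeSet_of_sat hr hmd hA1 hA2)
          · exact Set.subset_union_left
        · rw [canon_limit Γ r (f' β') hlim]
          apply Set.Subset.antisymm
          · exact Set.iUnion₂_subset fun α hα => (IH α hα).le
          · intro A hA
            exact Set.mem_biUnion hlim.pos (by rw [IH 0 hlim.pos]; exact hA)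
    obtain ⟨θ', hc1, hc2, hc3⟩ := hex (f' β')
    have hfinal : canon Γ r (f' β') θ' = f β :=
      limit_eq ⟨hr, hwf, hmd⟩ hf hrf hsf hc1 hc2 hc3 hL'L
    rw [claim2 θ'] at hfinal
    exact hfinal.symm
end

section
/- Let Γ : Set X → Set X be a derivability operator and suppose the binary relation ≺ strictly orders Γ. Then terminal natural inductions of Γ from ∅ that respect ≺ exist, and any two of them have the same limit; moreover, if ≺' is another relation that strictly orders Γ, then the terminal natural inductions respecting ≺' converge to the same limit as those respecting ≺. -/
universe u

variable {X : Type u}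

noncomputable def limW (Γ : Set X → Set X) (r : X → X → Prop) (hwf : WellFounded r) : Set X :=
  {A | hwf.fix (fun A IH => A ∈ Γ {B | ∃ h : r B A, IH B h}) A}

lemma mem_limW_iff (Γ : Set X → Set X) (r : X → X → Prop) (hwf : WellFounded r)
    (hdep : IsDep Γ r) (A : X) : A ∈ limW Γ r hwf ↔ A ∈ Γ (limW Γ r hwf) := by
  have hfix := hwf.fix_eq (C := fun _ => Prop)
    (fun A (IH : ∀ B, r B A → Prop) => A ∈ Γ {B | ∃ h : r B A, IH B h}) A
  simp only [limW, Set.mem_setOf_eq]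
  rw [hfix]
  refine hdep A _ _ ?_
  ext B
  simp only [Set.mem_inter_iff, Set.mem_setOf_eq]
  constructor
  · rintro ⟨⟨h1, h2⟩, h3⟩; exact ⟨h2, h3⟩
  · rintro ⟨h2, h3⟩; exact ⟨⟨h3, h2⟩, h3⟩

lemma fix_unique (Γ : Set X → Set X) (r : X → X → Prop) (hwf : WellFounded r)
    (hdep : IsDep Γ r) (S T : Set X)
    (hS : ∀ A, A ∈ S ↔ A ∈ Γ S) (hT : ∀ A, A ∈ T ↔ A ∈ Γ T) : S = T := by
  ext A
  induction A using hwf.induction with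
  | _ A IH =>
    have e : S ∩ {B | r B A} = T ∩ {B | r B A} := by
      ext B
      simp only [Set.mem_inter_iff, Set.mem_setOf_eq]
      exact and_congr_left fun hr => IH B hr
    rw [hS, hT, hdep A S T e]

set_option maxHeartbeats 1000000 in
lemma limit_eq_limW (Γ : Set X → Set X) (r : X → X → Prop)
    (htr : Transitive r) (hwf : WellFounded r) (hdep : IsDep Γ r)
    (β : Ordinal.{u}) (f : Ordinal.{u} → Set X)
    (hf0 : f 0 = ∅)
    (hfs : ∀ α : Ordinal.{u}, α + 1 ≤ β → f α ⊆ f (α + 1) ∧ f (α + 1) \ f α ⊆ Γ (f α))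
    (hfl : ∀ lam : Ordinal.{u}, lam ≤ β → Order.IsSuccLimit lam → f lam = ⋃ α < lam, f α)
    (hresp : ∀ α : Ordinal.{u}, α + 1 ≤ β → ∀ A ∈ f (α + 1) \ f α, Γ (f α) ∩ {B | r B A} ⊆ f α)
    (hsat : Γ (f β) ⊆ f β) :
    f β = limW Γ r hwf := by
  set W := limW Γ r hwf with hWdef
  have hWmem : ∀ A, A ∈ W ↔ A ∈ Γ W := mem_limW_iff Γ r hwf hdep
  have step1 : ∀ α, α ≤ β → f α ⊆ W := by
    intro α
    induction α using Ordinal.limitRecOn with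
    | zero => intro _; rw [hf0]; exact Set.empty_subset _
    | add_one α IH =>
      intro hle A hA
      have hle0 : α ≤ β := le_trans (le_self_add (a := α) (b := 1)) hle
      by_cases hmem : A ∈ f α
      · exact IH hle0 hmem
      have hsub : f α ⊆ W := IH hle0
      have hAd : A ∈ Γ (f α) := (hfs α hle).2 ⟨hA, hmem⟩
      have hsatA : Γ (f α) ∩ {B | r B A} ⊆ f α := hresp α hle A ⟨hA, hmem⟩
      have key : ∀ B, r B A → B ∈ W → B ∈ f α := by
        intro B
        induction B using hwf.induction with
        | _ B IH2 =>
          intro hBA hBW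
          have e : W ∩ {C | r C B} = f α ∩ {C | r C B} := by
            ext C
            simp only [Set.mem_inter_iff, Set.mem_setOf_eq]
            constructor
            · rintro ⟨hCW, hCB⟩; exact ⟨IH2 C hCB (htr hCB hBA) hCW, hCB⟩
            · rintro ⟨hC, hCB⟩; exact ⟨hsub hC, hCB⟩
          have hBd : B ∈ Γ (f α) := (hdep B W (f α) e).mp ((hWmem B).mp hBW)
          exact hsatA ⟨hBd, hBA⟩
      have e : f α ∩ {B | r B A} = W ∩ {B | r B A} := by
        ext B
        simp only [Set.mem_inter_iff, Set.mem_setOf_eq]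
        constructor
        · rintro ⟨h1, h2⟩; exact ⟨hsub h1, h2⟩
        · rintro ⟨h1, h2⟩; exact ⟨key B h2 h1, h2⟩
      exact (hWmem A).mpr ((hdep A (f α) W e).mp hAd)
    | limit lam hlim IH =>
      intro hle A hA
      rw [hfl lam hle hlim] at hA
      simp only [Set.mem_iUnion] at hA
      obtain ⟨α, hαl, hα⟩ := hA
      exact IH α hαl (le_trans hαl.le hle) hα
  have step2 : W ⊆ f β := by
    intro A
    induction A using hwf.induction with
    | _ A IH =>
      intro hAW
      have e : W ∩ {B | r B A} = f β ∩ {B | r B A} := by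
        ext B
        simp only [Set.mem_inter_iff, Set.mem_setOf_eq]
        constructor
        · rintro ⟨h1, h2⟩; exact ⟨IH B h2 h1, h2⟩
        · rintro ⟨h1, h2⟩; exact ⟨step1 β le_rfl h1, h2⟩
      exact hsat ((hdep A W (f β) e).mp ((hWmem A).mp hAW))
  exact Set.Subset.antisymm (step1 β le_rfl) step2

set_option linter.deprecated false in
lemma exists_termInd (Γ : Set X → Set X) (r : X → X → Prop)
    (hwf : WellFounded r) (hdep : IsDep Γ r) :
    ∃ (β : Ordinal.{u}) (f : Ordinal.{u} → Set X),
      (f 0 = (∅ : Set X) ∧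
       (∀ α : Ordinal.{u}, α + 1 ≤ β → f α ⊆ f (α + 1) ∧ f (α + 1) \ f α ⊆ Γ (f α)) ∧
       ∀ lam : Ordinal.{u}, lam ≤ β → Order.IsSuccLimit lam → f lam = ⋃ α < lam, f α) ∧
      (∀ α : Ordinal.{u}, α + 1 ≤ β → ∀ A ∈ f (α + 1) \ f α, Γ (f α) ∩ {B | r B A} ⊆ f α) ∧
      Γ (f β) ⊆ f β := by
  classical
  set W := limW Γ r hwf with hWdef
  have hWmem : ∀ A, A ∈ W ↔ A ∈ Γ W := mem_limW_iff Γ r hwf hdep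
  set rk : X → Ordinal.{u} := fun A => (hwf.apply A).rank with hrk
  have hrkmono : ∀ {A B : X}, r A B → rk A < rk B := fun hAB => Acc.rank_lt_of_rel _ hAB
  refine ⟨Ordinal.lsub rk, fun α => {A | A ∈ W ∧ rk A < α}, ⟨?_, ?_, ?_⟩, ?_, ?_⟩
  · ext A; simp
  · intro α hle
    constructor
    · rintro A ⟨hAW, hlt⟩
      exact ⟨hAW, lt_of_lt_of_le hlt (le_self_add (a := α) (b := 1))⟩
    · rintro A ⟨⟨hAW, hlt⟩, hnot⟩
      have hle2 : rk A ≤ α := by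
        rw [Ordinal.add_one_eq_succ, Order.lt_succ_iff] at hlt
        exact hlt
      have e : W ∩ {B | r B A} = {A | A ∈ W ∧ rk A < α} ∩ {B | r B A} := by
        ext B
        simp only [Set.mem_inter_iff, Set.mem_setOf_eq]
        constructor
        · rintro ⟨hBW, hBA⟩; exact ⟨⟨hBW, lt_of_lt_of_le (hrkmono hBA) hle2⟩, hBA⟩
        · rintro ⟨⟨hBW, _⟩, hBA⟩; exact ⟨hBW, hBA⟩
      exact (hdep A W _ e).mp ((hWmem A).mp hAW)
  · intro lam hle hlim
    ext A
    simp only [Set.mem_iUnion, Set.mem_setOf_eq]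
    constructor
    · rintro ⟨hAW, hlt⟩
      exact ⟨rk A + 1, by rw [Ordinal.add_one_eq_succ]; exact hlim.succ_lt hlt,
        hAW, by rw [Ordinal.add_one_eq_succ]; exact Order.lt_succ _⟩
    · rintro ⟨α, hαl, hAW, hlt⟩
      exact ⟨hAW, lt_trans hlt hαl⟩
  · rintro α hle A ⟨⟨hAW, hlt⟩, hnot⟩ B ⟨hBd, hBA⟩
    have hle2 : rk A ≤ α := by
      rw [Ordinal.add_one_eq_succ, Order.lt_succ_iff] at hlt
      exact hlt
    have hBlt : rk B < α := lt_of_lt_of_le (hrkmono hBA) hle2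
    have e : {A | A ∈ W ∧ rk A < α} ∩ {C | r C B} = W ∩ {C | r C B} := by
      ext C
      simp only [Set.mem_inter_iff, Set.mem_setOf_eq]
      constructor
      · rintro ⟨⟨hCW, _⟩, hCB⟩; exact ⟨hCW, hCB⟩
      · rintro ⟨hCW, hCB⟩; exact ⟨⟨hCW, lt_trans (hrkmono hCB) hBlt⟩, hCB⟩
    exact ⟨(hWmem B).mpr ((hdep B _ W e).mp hBd), hBlt⟩
  · have e : {A | A ∈ W ∧ rk A < Ordinal.lsub rk} = W := by
      ext A
      simp only [Set.mem_setOf_eq]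
      exact ⟨fun h => h.1, fun h => ⟨h, Ordinal.lt_lsub rk A⟩⟩
    show Γ {A | A ∈ W ∧ rk A < Ordinal.lsub rk} ⊆ {A | A ∈ W ∧ rk A < Ordinal.lsub rk}
    rw [e]
    intro A hA
    exact (hWmem A).mpr hA

/-- for `r` strictly ordering `Γ`: terminal natural inductions from `∅`
respecting `r` exist, any two have the same limit, and for another strictly ordering relation
`r'` the terminal natural inductions respecting `r'` converge to the same limit. -/
theorem stmt8 (Γ : Set X → Set X) (r r' : X → X → Prop)
    (h : StrictOrders Γ r) (h' : StrictOrders Γ r') :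
    (∃ (β : Ordinal.{u}) (f : Ordinal.{u} → Set X),
        IsNatInd Γ ∅ β f ∧ Respects Γ β f r ∧ Saturated Γ (f β)) ∧
    (∀ (β : Ordinal.{u}) (f : Ordinal.{u} → Set X) (β' : Ordinal.{u}) (f' : Ordinal.{u} → Set X),
        IsNatInd Γ ∅ β f → Respects Γ β f r → Saturated Γ (f β) →
        IsNatInd Γ ∅ β' f' → Respects Γ β' f' r → Saturated Γ (f' β') →
        f β = f' β') ∧
    (∀ (β : Ordinal.{u}) (f : Ordinal.{u} → Set X) (β' : Ordinal.{u}) (f' : Ordinal.{u} → Set X),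
        IsNatInd Γ ∅ β f → Respects Γ β f r → Saturated Γ (f β) →
        IsNatInd Γ ∅ β' f' → Respects Γ β' f' r' → Saturated Γ (f' β') →
        f β = f' β') := by
  obtain ⟨htr, hirr, hwf, hdep⟩ := h
  obtain ⟨htr', hirr', hwf', hdep'⟩ := h'
  obtain ⟨β₀, f₀, ⟨hf0, hfs, hfl⟩, hresp₀, hsat₀⟩ := exists_termInd Γ r hwf hdep
  refine ⟨⟨β₀, f₀, ⟨hf0, hfs, hfl⟩, hresp₀, hsat₀⟩, ?_, ?_⟩
  · intro β f β' f' h1 h2 h3 h1' h2' h3'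
    rw [limit_eq_limW Γ r htr hwf hdep β f h1.1 h1.2.1 h1.2.2 h2 h3,
        limit_eq_limW Γ r htr hwf hdep β' f' h1'.1 h1'.2.1 h1'.2.2 h2' h3']
  · intro β f β' f' h1 h2 h3 h1' h2' h3'
    rw [limit_eq_limW Γ r htr hwf hdep β f h1.1 h1.2.1 h1.2.2 h2 h3,
        limit_eq_limW Γ r' htr' hwf' hdep' β' f' h1'.1 h1'.2.1 h1'.2.2 h2' h3']
    exact fix_unique Γ r hwf hdep _ _ (mem_limW_iff Γ r hwf hdep) (mem_limW_iff Γ r' hwf' hdep')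
end

section
/- Let Γ : Set X → Set X be a derivability operator and f a natural induction of Γ from a structure S of length β. Then for all ordinals i ≤ j ≤ β, Safe(f i) ⊆ Safe(f j) and Underivable(f i) ⊆ Underivable(f j): every atom safely derivable from f i is safely derivable from f j, and every atom strictly underivable from f i is strictly underivable from f j. -/
universe u

variable {X : Type u}

lemma natInd_mono {Γ : Set X → Set X} {S : Set X} {β : Ordinal.{u}} {f : Ordinal.{u} → Set X}
    (hni : IsNatInd Γ S β f) : ∀ j : Ordinal.{u}, j ≤ β → ∀ i, i ≤ j → f i ⊆ f j := by
  intro j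
  induction j using Ordinal.limitRecOn with
  | zero =>
    intro _ i hi
    rw [nonpos_iff_eq_zero.1 hi]
  | add_one j ih =>
    intro hj i hi
    have hjβ : j ≤ β := le_trans le_self_add hj
    rcases eq_or_lt_of_le hi with h | h
    · rw [h]
    · have hij : i ≤ j := by
        rw [Ordinal.add_one_eq_succ] at h
        exact Order.lt_succ_iff.1 h
      exact (ih hjβ i hij).trans (hni.2.1 j hj).1
  | limit lam hlim ih =>
    intro hlam i hi
    rcases eq_or_lt_of_le hi with h | h
    · rw [h]
    · rw [hni.2.2 lam hlam hlim]
      intro x hx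
      exact Set.mem_iUnion₂.2 ⟨i, h, hx⟩

lemma natInd_concat {Γ : Set X → Set X} {S : Set X} {β : Ordinal.{u}} {f : Ordinal.{u} → Set X}
    (hni : IsNatInd Γ S β f) {i j : Ordinal.{u}} (hij : i ≤ j) (hjβ : j ≤ β)
    {γ : Ordinal.{u}} {g : Ordinal.{u} → Set X} (hg : IsNatInd Γ (f j) γ g) :
    IsNatInd Γ (f i) ((j - i) + γ)
      (fun α => if α < j - i then f (i + α) else g (α - (j - i))) := by
  set δ := j - i with hδdef
  have hδ : i + δ = j := Ordinal.add_sub_cancel_of_le hij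
  have hval : ∀ α ≤ δ, (if α < δ then f (i + α) else g (α - δ)) = f (i + α) := by
    intro α hα
    rcases lt_or_eq_of_le hα with h | h
    · rw [if_pos h]
    · subst h
      rw [if_neg (lt_irrefl _), Ordinal.sub_self, hg.1, hδ]
  refine ⟨?_, ?_, ?_⟩
  · simpa using hval 0 (zero_le : (0 : Ordinal.{u}) ≤ δ)
  · intro α hα
    dsimp only
    rcases lt_or_ge α δ with h | h
    · have hα1 : α + 1 ≤ δ := Order.succ_le_of_lt h
      rw [hval α h.le, hval (α + 1) hα1, ← add_assoc]
      exact hni.2.1 (i + α)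
        (by rw [add_assoc]; exact le_trans (add_le_add_right hα1 i) (hδ ▸ hjβ))
    · have e3 : α + 1 = δ + ((α - δ) + 1) := by
        rw [← add_assoc, Ordinal.add_sub_cancel_of_le h]
      have e4 : (α + 1) - δ = (α - δ) + 1 := by rw [e3, Ordinal.add_sub_cancel]
      have hle : (α - δ) + 1 ≤ γ := by
        rw [e3] at hα
        exact (add_le_add_iff_left δ).1 hα
      rw [if_neg (not_lt.2 h), if_neg (not_lt.2 (h.trans le_self_add)), e4]
      exact hg.2.1 (α - δ) hle
  · intro lam hlam hlim
    dsimp only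
    rcases le_or_gt lam δ with h | h
    · have hilam : Order.IsSuccLimit (i + lam) := Ordinal.isSuccLimit_add i hlim
      have hle : i + lam ≤ β := le_trans (add_le_add_right h i) (hδ ▸ hjβ)
      rw [hval lam h, hni.2.2 (i + lam) hle hilam]
      ext x
      simp only [Set.mem_iUnion₂]
      constructor
      · rintro ⟨α', hα', hx⟩
        rcases le_or_gt α' i with h2 | h2
        · refine ⟨0, hlim.pos, ?_⟩
          have h0 : (0 : Ordinal.{u}) < δ ∨ (0 : Ordinal.{u}) = δ := lt_or_eq_of_le (zero_le : (0 : Ordinal.{u}) ≤ δ)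
          rw [hval 0 (zero_le : (0 : Ordinal.{u}) ≤ δ), add_zero]
          exact natInd_mono hni i (hij.trans hjβ) α' h2 hx
        · have h3 : i ≤ α' := h2.le
          have e : i + (α' - i) = α' := Ordinal.add_sub_cancel_of_le h3
          have hlt : α' - i < lam := by
            rw [← add_lt_add_iff_left i, e]; exact hα'
          refine ⟨α' - i, hlt, ?_⟩
          rw [hval (α' - i) (hlt.le.trans h), e]
          exact hx
      · rintro ⟨α, hα, hx⟩
        rw [hval α (hα.le.trans h)] at hx
        exact ⟨i + α, add_lt_add_right hα i, hx⟩
    · have hsub : Order.IsSuccLimit (lam - δ) := Ordinal.isSuccLimit_sub hlim.isSuccPrelimit h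
      have hlamδ : δ + (lam - δ) = lam := Ordinal.add_sub_cancel_of_le h.le
      have hsle : lam - δ ≤ γ := by
        rw [← add_le_add_iff_left δ, hlamδ]; exact hlam
      rw [if_neg (not_lt.2 h.le), hg.2.2 (lam - δ) hsle hsub]
      ext x
      simp only [Set.mem_iUnion₂]
      constructor
      · rintro ⟨μ, hμ, hx⟩
        refine ⟨δ + μ, by rw [← hlamδ]; exact add_lt_add_right hμ δ, ?_⟩
        rw [if_neg (not_lt.2 le_self_add), Ordinal.add_sub_cancel]
        exact hx
      · rintro ⟨α, hα, hx⟩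
        rcases lt_or_ge α δ with h2 | h2
        · rw [if_pos h2] at hx
          refine ⟨0, hsub.pos, ?_⟩
          rw [hg.1, ← hδ]
          exact natInd_mono hni (i + δ) (hδ ▸ hjβ) (i + α) (add_le_add_right h2.le i) hx
        · rw [if_neg (not_lt.2 h2)] at hx
          have : α - δ < lam - δ := by
            rw [← add_lt_add_iff_left δ, Ordinal.add_sub_cancel_of_le h2, hlamδ]
            exact hα
          exact ⟨α - δ, this, hx⟩

lemma natInd_concat_end {i j δ γ : Ordinal.{u}} (h : δ = j - i) {f g : Ordinal.{u} → Set X} :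
    (fun α => if α < j - i then f (i + α) else g (α - (j - i))) (δ + γ) = g γ := by
  subst h
  dsimp only
  rw [if_neg (not_lt.2 le_self_add), Ordinal.add_sub_cancel]

/-- along a natural induction, the sets of safely derivable and of strictly
underivable atoms grow monotonically. -/
theorem stmt9 (Γ : Set X → Set X) (S : Set X) (β : Ordinal.{u}) (f : Ordinal.{u} → Set X)
    (hni : IsNatInd Γ S β f) :
    ∀ i j : Ordinal.{u}, i ≤ j → j ≤ β →
      SafeSet Γ (f i) ⊆ SafeSet Γ (f j) ∧ UnderivSet Γ (f i) ⊆ UnderivSet Γ (f j) := by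
  intro i j hij hjβ
  have key : ∀ (γ : Ordinal.{u}) (g : Ordinal.{u} → Set X), IsNatInd Γ (f j) γ g →
      ∃ (β' : Ordinal.{u}) (h : Ordinal.{u} → Set X), IsNatInd Γ (f i) β' h ∧ h β' = g γ := by
    intro γ g hg
    exact ⟨(j - i) + γ, _, natInd_concat hni hij hjβ hg, natInd_concat_end rfl⟩
  have triv : IsNatInd Γ (f j) 0 (fun _ => f j) := by
    refine ⟨rfl, ?_, ?_⟩
    · intro α hα
      rw [nonpos_iff_eq_zero, Ordinal.add_one_eq_succ] at hα
      exact absurd hα (Order.succ_ne_bot α)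
    · intro lam hlam hlim
      exact absurd (nonpos_iff_eq_zero.1 hlam) hlim.pos.ne'
  constructor
  · rintro A ⟨hA1, hA2⟩
    refine ⟨?_, ?_⟩
    · obtain ⟨β', h, hh, he⟩ := key 0 _ triv
      have := hA2 β' h hh
      rwa [he] at this
    · intro γ g hg
      obtain ⟨β', h, hh, he⟩ := key γ g hg
      have := hA2 β' h hh
      rwa [he] at this
  · intro A hA γ g hg
    obtain ⟨β', h, hh, he⟩ := key γ g hg
    have := hA β' h hh
    rwa [he] at this
end

section
/- Let Γ : Set X → Set X be a derivability operator and ∝ a transitive binary relation on X such that ≺_∝ is well-founded. Then every natural induction of Γ from ∅ that respects ∝ can be extended to a terminal natural induction of Γ from ∅ that respects ∝: for every natural induction f of length β respecting ∝ there is a terminal natural induction g of some length β' ≥ β respecting ∝ with g α = f α for all α ≤ β. -/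
universe u

variable {X : Type u}

section StmtTwelveAux

open scoped Classical

variable (Γ : Set X → Set X) (r : X → X → Prop) (hwf : WellFounded (Prec r))
  (β : Ordinal.{u}) (f : Ordinal.{u} → Set X)

/-- Extension of the natural induction `f` beyond `β`: at each later successor stage we add
a `≺ᵣ`-minimal derivable-but-absent atom (if any), at limits we take unions. -/
noncomputable def hseq (o : Ordinal.{u}) : Set X :=
  Ordinal.limitRecOn o (f 0)
    (fun α ih => if α + 1 ≤ β then f (α + 1)
      else if hne : (Γ ih \ ih).Nonempty then insert (hwf.min _ hne) ih else ih)
    (fun lam _ ih => ⋃ (α : Ordinal.{u}) (h : α < lam), ih α h)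

lemma hseq_zero : hseq Γ r hwf β f 0 = f 0 := Ordinal.limitRecOn_zero _ _ _

lemma hseq_succ (α : Ordinal.{u}) :
    hseq Γ r hwf β f (α + 1) = if α + 1 ≤ β then f (α + 1)
      else if hne : (Γ (hseq Γ r hwf β f α) \ hseq Γ r hwf β f α).Nonempty then
        insert (hwf.min _ hne) (hseq Γ r hwf β f α) else hseq Γ r hwf β f α := by
  unfold hseq
  rw [Ordinal.limitRecOn_add_one]

lemma hseq_limit (lam : Ordinal.{u}) (hl : Order.IsSuccLimit lam) :
    hseq Γ r hwf β f lam = ⋃ α < lam, hseq Γ r hwf β f α := by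
  unfold hseq
  rw [Ordinal.limitRecOn_limit _ _ _ _ hl]

variable {Γ β f}

lemma hseq_eq_f (hni : IsNatInd Γ ∅ β f) :
    ∀ α : Ordinal.{u}, α ≤ β → hseq Γ r hwf β f α = f α := by
  intro α
  induction α using Ordinal.limitRecOn with
  | zero => intro _; exact hseq_zero Γ r hwf β f
  | add_one α _ =>
    intro hle
    rw [hseq_succ, if_pos hle]
  | limit lam hl ih =>
    intro hle
    rw [hseq_limit Γ r hwf β f lam hl, hni.2.2 lam hle hl]
    exact Set.iUnion₂_congr fun α hα => ih α hα (le_of_lt (lt_of_lt_of_le hα hle))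

lemma hseq_step (hni : IsNatInd Γ ∅ β f) (α : Ordinal.{u}) :
    hseq Γ r hwf β f α ⊆ hseq Γ r hwf β f (α + 1) := by
  rw [hseq_succ]
  by_cases h1 : α + 1 ≤ β
  · rw [if_pos h1]
    have hα : α ≤ β := le_of_lt (lt_of_lt_of_le
      (by rw [Ordinal.add_one_eq_succ]; exact Order.lt_succ α) h1)
    rw [hseq_eq_f r hwf hni α hα]
    exact (hni.2.1 α h1).1
  · rw [if_neg h1]
    by_cases h2 : (Γ (hseq Γ r hwf β f α) \ hseq Γ r hwf β f α).Nonempty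
    · rw [dif_pos h2]; exact Set.subset_insert _ _
    · rw [dif_neg h2]

lemma hseq_mono (hni : IsNatInd Γ ∅ β f) :
    ∀ γ α : Ordinal.{u}, α ≤ γ → hseq Γ r hwf β f α ⊆ hseq Γ r hwf β f γ := by
  intro γ
  induction γ using Ordinal.limitRecOn with
  | zero => intro α hα; rw [nonpos_iff_eq_zero.mp hα]
  | add_one γ ih =>
    intro α hα
    rcases eq_or_lt_of_le hα with h | h
    · rw [h]
    · have hαγ : α ≤ γ := by
        rwa [Ordinal.add_one_eq_succ, Order.lt_succ_iff] at h
      exact (ih α hαγ).trans (hseq_step r hwf hni γ)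
  | limit lam hl ih =>
    intro α hα
    rcases eq_or_lt_of_le hα with h | h
    · rw [h]
    · rw [hseq_limit Γ r hwf β f lam hl]
      intro x hx
      exact Set.mem_biUnion h hx

end StmtTwelveAux

/-- if `r` is transitive and `≺_r` is well-founded, every natural induction from
`∅` respecting `r` extends to a terminal natural induction from `∅` respecting `r`. -/
theorem stmt12 (Γ : Set X → Set X) (r : X → X → Prop)
    (htr : Transitive r) (hwf : WellFounded (Prec r))
    (β : Ordinal.{u}) (f : Ordinal.{u} → Set X)
    (hni : IsNatInd Γ ∅ β f) (hresp : Respects Γ β f (Prec r)) :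
    ∃ β' : Ordinal.{u}, β ≤ β' ∧ ∃ g : Ordinal.{u} → Set X,
      IsNatInd Γ ∅ β' g ∧ Respects Γ β' g (Prec r) ∧ Saturated Γ (g β') ∧
      ∀ α : Ordinal.{u}, α ≤ β → g α = f α := by
  classical
  have hsucclt : ∀ γ : Ordinal.{u}, γ < γ + 1 := fun γ => by
    rw [Ordinal.add_one_eq_succ]; exact Order.lt_succ γ
  have hterm : ∃ γ : Ordinal.{u}, β ≤ γ ∧ Saturated Γ (hseq Γ r hwf β f γ) := by
    by_contra hcon
    push_neg at hcon
    have key : ∀ γ : Ordinal.{u}, β ≤ γ →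
        ∃ m, m ∈ hseq Γ r hwf β f (γ + 1) ∧ m ∉ hseq Γ r hwf β f γ := by
      intro γ hγ
      have hne : (Γ (hseq Γ r hwf β f γ) \ hseq Γ r hwf β f γ).Nonempty := by
        rcases Set.not_subset.mp (hcon γ hγ) with ⟨x, hx1, hx2⟩
        exact ⟨x, hx1, hx2⟩
      refine ⟨hwf.min _ hne, ?_, (hwf.min_mem _ hne).2⟩
      rw [hseq_succ, if_neg (not_le.mpr (lt_of_le_of_lt hγ (hsucclt γ))), dif_pos hne]
      exact Set.mem_insert _ _
    have hinj : Function.Injective (fun δ : Ordinal.{u} => hseq Γ r hwf β f (β + δ)) := by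
      have haux : ∀ δ₁ δ₂ : Ordinal.{u}, δ₁ < δ₂ →
          hseq Γ r hwf β f (β + δ₁) ≠ hseq Γ r hwf β f (β + δ₂) := by
        intro δ₁ δ₂ hlt hEq
        obtain ⟨m, hm1, hm2⟩ := key (β + δ₁) le_self_add
        have hsub : hseq Γ r hwf β f (β + δ₁ + 1) ⊆ hseq Γ r hwf β f (β + δ₂) := by
          apply hseq_mono r hwf hni
          rw [add_assoc]
          exact add_le_add_right (Order.add_one_le_iff.mpr hlt) β
        exact hm2 (hEq ▸ hsub hm1)
      intro δ₁ δ₂ hEq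
      rcases lt_trichotomy δ₁ δ₂ with h' | h' | h'
      · exact absurd hEq (haux _ _ h')
      · exact h'
      · exact absurd hEq.symm (haux _ _ h')
    exact not_small_ordinal.{u} (small_of_injective hinj)
  obtain ⟨γ, hβγ, hsat⟩ := hterm
  refine ⟨γ, hβγ, hseq Γ r hwf β f, ⟨by rw [hseq_zero, hni.1], ?_, ?_⟩, ?_, hsat,
    fun α hα => hseq_eq_f r hwf hni α hα⟩
  · intro α hα1
    by_cases h1 : α + 1 ≤ β
    · have hα : α ≤ β := le_of_lt (lt_of_lt_of_le (hsucclt α) h1)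
      rw [hseq_eq_f r hwf hni _ h1, hseq_eq_f r hwf hni α hα]
      exact hni.2.1 α h1
    · refine ⟨hseq_step r hwf hni α, ?_⟩
      rw [hseq_succ, if_neg h1]
      by_cases h2 : (Γ (hseq Γ r hwf β f α) \ hseq Γ r hwf β f α).Nonempty
      · rw [dif_pos h2]
        intro A hA
        have hAeq : A = hwf.min _ h2 := by
          rcases hA.1 with h' | h'
          · exact h'
          · exact absurd h' hA.2
        rw [hAeq]; exact (hwf.min_mem _ h2).1
      · rw [dif_neg h2]; intro A hA; exact absurd hA.1 hA.2
  · intro lam _ hl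
    exact hseq_limit Γ r hwf β f lam hl
  · intro α hα1 A hA
    by_cases h1 : α + 1 ≤ β
    · have hα : α ≤ β := le_of_lt (lt_of_lt_of_le (hsucclt α) h1)
      have e1 : hseq Γ r hwf β f (α + 1) = f (α + 1) := hseq_eq_f r hwf hni _ h1
      have e2 : hseq Γ r hwf β f α = f α := hseq_eq_f r hwf hni α hα
      rw [e1, e2] at hA
      rw [e2]
      exact hresp α h1 A hA
    · rw [hseq_succ, if_neg h1] at hA
      by_cases h2 : (Γ (hseq Γ r hwf β f α) \ hseq Γ r hwf β f α).Nonempty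
      · rw [dif_pos h2] at hA
        have hAeq : A = hwf.min _ h2 := by
          rcases hA.1 with h' | h'
          · exact h'
          · exact absurd h' hA.2
        intro B hB
        by_contra hBnot
        exact hwf.not_lt_min _ (⟨hB.1, hBnot⟩ :
          B ∈ Γ (hseq Γ r hwf β f α) \ hseq Γ r hwf β f α) (hAeq ▸ hB.2)
      · rw [dif_neg h2] at hA
        exact absurd hA.1 hA.2
end

section
/- Let Γ : Set X → Set X be a derivability operator and suppose the binary relation ∝ monotonically orders Γ. Let S ⊆ X be ∝-closed (i.e., for all A ∈ S and all B with B ∝ A, B ∈ S), and let 𝔄 be a structure that is saturated on S. Then for every natural induction f from 𝔄, (limit of f) ∩ S = 𝔄 ∩ S. -/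
universe u

variable {X : Type u}

/-- if `r` monotonically orders `Γ`, `S` is `r`-closed and `𝔄` is saturated on
`S`, then the limit of any natural induction from `𝔄` agrees with `𝔄` on `S`. -/
theorem stmt13 (Γ : Set X → Set X) (r : X → X → Prop) (hmo : MonOrders Γ r)
    (S : Set X) (hcl : ∀ A ∈ S, ∀ B : X, r B A → B ∈ S)
    (𝔄 : Set X) (hsat : SaturatedOn Γ 𝔄 S)
    (β : Ordinal.{u}) (f : Ordinal.{u} → Set X) (hni : IsNatInd Γ 𝔄 β f) :
    f β ∩ S = 𝔄 ∩ S := by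
  obtain ⟨htr, hwf, hmd⟩ := hmo
  obtain ⟨h0, hsucc, hlim⟩ := hni
  have hmono : ∀ γ ≤ β, ∀ α ≤ γ, f α ⊆ f γ := by
    intro γ
    induction γ using Ordinal.induction with
    | h γ ih =>
      intro hγβ α hαγ
      rcases eq_or_lt_of_le hαγ with rfl | hlt
      · exact subset_rfl
      rcases Ordinal.zero_or_succ_or_isSuccLimit γ with h0' | ⟨a, rfl⟩ | hl
      · exact absurd hlt (by simp [h0'])
      · have ha1 : Order.succ a = a + 1 := (Ordinal.add_one_eq_succ a).symm
        rw [ha1] at hγβ hlt ⊢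
        have haβ : a ≤ β := le_trans (le_of_lt (Order.lt_succ a)) (ha1 ▸ hγβ)
        have hαa : α ≤ a := Order.lt_succ_iff.mp (ha1 ▸ hlt)
        exact subset_trans (ih a (ha1 ▸ Order.lt_succ a) haβ α hαa)
          (hsucc a hγβ).1
      · rw [hlim γ hγβ hl]
        intro x hx; exact Set.mem_biUnion hlt hx
  have key : ∀ γ ≤ β, f γ ∩ S ⊆ 𝔄 := by
    intro γ
    induction γ using Ordinal.induction with
    | h γ ih =>
      intro hγβ A hA
      obtain ⟨hAf, hAS⟩ := hA
      rcases Ordinal.zero_or_succ_or_isSuccLimit γ with h0' | ⟨a, rfl⟩ | hl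
      · rw [h0', h0] at hAf; exact hAf
      · have ha1 : Order.succ a = a + 1 := (Ordinal.add_one_eq_succ a).symm
        rw [ha1] at hγβ hAf
        have halt : a < a + 1 := ha1 ▸ Order.lt_succ a
        have haβ : a ≤ β := le_trans (le_of_lt halt) hγβ
        by_cases hmem : A ∈ f a
        · exact ih a halt haβ ⟨hmem, hAS⟩
        · have hAΓ : A ∈ Γ (f a) := (hsucc a hγβ).2 ⟨hAf, hmem⟩
          have hsub : f a ∩ {B | r B A} ⊆ 𝔄 ∩ {B | r B A} := by
            rintro B ⟨hBf, hBr⟩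
            exact ⟨ih a halt haβ ⟨hBf, hcl A hAS B hBr⟩, hBr⟩
          have heq : f a ∩ {B | Prec r B A} = 𝔄 ∩ {B | Prec r B A} := by
            apply Set.eq_of_subset_of_subset
            · rintro B ⟨hBf, hBp⟩
              exact ⟨(hsub ⟨hBf, hBp.1⟩).1, hBp⟩
            · rintro B ⟨hB𝔄, hBp⟩
              refine ⟨hmono a haβ 0 (zero_le (a := a)) ?_, hBp⟩
              rw [h0]; exact hB𝔄
          exact hsat ⟨hmd A (f a) 𝔄 heq hsub hAΓ, hAS⟩
      · rw [hlim γ hγβ hl] at hAf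
        simp only [Set.mem_iUnion] at hAf
        obtain ⟨α, hαγ, hAα⟩ := hAf
        exact ih α hαγ (le_trans (le_of_lt hαγ) hγβ) ⟨hAα, hAS⟩
  apply Set.eq_of_subset_of_subset
  · intro A hA
    exact ⟨key β le_rfl hA, hA.2⟩
  · intro A hA
    refine ⟨hmono β le_rfl 0 (zero_le (a := β)) ?_, hA.2⟩
    rw [h0]; exact hA.1
end

section
/- Let Γ : Set X → Set X be a derivability operator and suppose the binary relation ∝ monotonically orders Γ. If a structure 𝔄 is saturated on {B | B ∝ A} and A ∈ Γ 𝔄, then for every natural induction f from 𝔄 it holds that A ∈ Γ (limit of f). -/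
universe u

variable {X : Type u}

/-- if `r` monotonically orders `Γ`, `𝔄` is saturated on `{B | r B A}` and `A`
is derivable from `𝔄`, then `A` is derivable from the limit of every natural induction from
`𝔄`. -/
theorem stmt14 (Γ : Set X → Set X) (r : X → X → Prop) (hmo : MonOrders Γ r)
    (𝔄 : Set X) (A : X) (hsat : SaturatedOn Γ 𝔄 {B | r B A}) (hA : A ∈ Γ 𝔄)
    (β : Ordinal.{u}) (f : Ordinal.{u} → Set X) (hni : IsNatInd Γ 𝔄 β f) :
    A ∈ Γ (f β) := by
  obtain ⟨htr, _hwf, hmd⟩ := hmo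
  obtain ⟨h0, hstep, hlim⟩ := hni
  have key : ∀ α : Ordinal.{u}, α ≤ β → 𝔄 ⊆ f α ∧ f α ∩ {B | r B A} ⊆ 𝔄 := by
    intro α
    induction α using Ordinal.induction with
    | h α ih =>
      intro hαβ
      rcases Ordinal.zero_or_succ_or_isSuccLimit α with h | ⟨γ, rfl⟩ | hl
      · subst h; rw [h0]; exact ⟨subset_rfl, fun C hC => hC.1⟩
      · rw [← Ordinal.add_one_eq_succ] at ih hαβ ⊢
        have hγlt : γ < γ + 1 := by rw [Ordinal.add_one_eq_succ]; exact Order.lt_succ γ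
        have hγβ : γ ≤ β := le_trans hγlt.le hαβ
        obtain ⟨ih1, ih2⟩ := ih γ hγlt hγβ
        obtain ⟨hsub, hnew⟩ := hstep γ hαβ
        constructor
        · exact ih1.trans hsub
        · rintro C ⟨hCf, hCr⟩
          by_cases hCα : C ∈ f γ
          · exact ih2 ⟨hCα, hCr⟩
          · have hCΓ : C ∈ Γ (f γ) := hnew ⟨hCf, hCα⟩
            have heq : f γ ∩ {B | r B C} = 𝔄 ∩ {B | r B C} := by
              ext B
              constructor
              · rintro ⟨hB, hBr⟩
                exact ⟨ih2 ⟨hB, htr hBr hCr⟩, hBr⟩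
              · rintro ⟨hB, hBr⟩; exact ⟨ih1 hB, hBr⟩
            have heqp : f γ ∩ {B | Prec r B C} = 𝔄 ∩ {B | Prec r B C} := by
              ext B
              constructor
              · rintro ⟨hB, hBr⟩
                exact ⟨(heq.le ⟨hB, hBr.1⟩).1, hBr⟩
              · rintro ⟨hB, hBr⟩; exact ⟨ih1 hB, hBr⟩
            have hC𝔄 : C ∈ Γ 𝔄 := hmd C (f γ) 𝔄 heqp heq.le hCΓ
            exact hsat ⟨hC𝔄, hCr⟩
      · have hu := hlim α hαβ hl
        constructor
        · intro B hB
          rw [hu]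
          have h0lt : (0 : Ordinal.{u}) < α := hl.pos
          exact Set.mem_biUnion h0lt (by rw [h0]; exact hB)
        · rintro C ⟨hCf, hCr⟩
          rw [hu] at hCf
          obtain ⟨γ, hγα, hCγ⟩ := Set.mem_iUnion₂.mp hCf
          exact (ih γ hγα (le_trans hγα.le hαβ)).2 ⟨hCγ, hCr⟩
  obtain ⟨k1, k2⟩ := key β le_rfl
  have heq : 𝔄 ∩ {B | r B A} = f β ∩ {B | r B A} := by
    ext B
    constructor
    · rintro ⟨hB, hBr⟩; exact ⟨k1 hB, hBr⟩
    · rintro ⟨hB, hBr⟩; exact ⟨k2 ⟨hB, hBr⟩, hBr⟩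
  have heqp : 𝔄 ∩ {B | Prec r B A} = f β ∩ {B | Prec r B A} := by
    ext B
    constructor
    · rintro ⟨hB, hBr⟩; exact ⟨k1 hB, hBr⟩
    · rintro ⟨hB, hBr⟩
      exact ⟨(heq.ge ⟨hB, hBr.1⟩).1, hBr⟩
  exact hmd A 𝔄 (f β) heqp heq.le hA
end

section
/- Let Γ : Set X → Set X be a derivability operator and suppose the binary relation ∝ monotonically orders Γ. Then every natural induction of Γ from ∅ that respects ∝ is safe. Moreover, if a structure 𝔄 is saturated on {B | B ≺_∝ A} and A ∈ Γ 𝔄, then A is safely derivable from 𝔄. -/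
universe u

variable {X : Type u}

theorem aux_key {Γ : Set X → Set X} {r : X → X → Prop} (hmo : MonOrders Γ r)
    (𝔄 : Set X) (A : X) (hsat : SaturatedOn Γ 𝔄 {B | Prec r B A}) (hA : A ∈ Γ 𝔄) :
    A ∈ SafeSet Γ 𝔄 := by
  obtain ⟨htr, _hwf, hdep⟩ := hmo
  refine ⟨hA, ?_⟩
  intro β g hg
  obtain ⟨hg0, hgsucc, hglim⟩ := hg
  have key : ∀ B C : X, Prec r B A → r C B → Prec r C A := by
    rintro B C ⟨hBA, hAB⟩ hCB
    exact ⟨htr hCB hBA, fun hAC => hAB (htr hAC hCB)⟩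
  -- monotonicity: 𝔄 ⊆ g α for all α ≤ β
  have hmono : ∀ α : Ordinal.{u}, α ≤ β → 𝔄 ⊆ g α := by
    intro α
    induction α using Ordinal.induction with
    | h α ih =>
      intro hαβ
      rcases Ordinal.zero_or_succ_or_isSuccLimit α with h0 | ⟨a, ha⟩ | hlim
      · subst h0; rw [hg0]
      · have ha' : α = a + 1 := by rw [← ha, Ordinal.add_one_eq_succ]
        subst ha'
        have halt : a < a + 1 := by
          rw [Ordinal.add_one_eq_succ]; exact Order.lt_succ a
        exact (ih a halt (le_trans halt.le hαβ)).trans (hgsucc a hαβ).1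
      · rw [hglim α hαβ hlim]
        intro x hx
        exact Set.mem_iUnion₂.2 ⟨0, hlim.pos, by rwa [hg0]⟩
  -- invariant: no new strict predecessors of A appear
  have hinv : ∀ α : Ordinal.{u}, α ≤ β → ∀ B ∈ g α, Prec r B A → B ∈ 𝔄 := by
    intro α
    induction α using Ordinal.induction with
    | h α ih =>
      intro hαβ B hB hBA
      rcases Ordinal.zero_or_succ_or_isSuccLimit α with h0 | ⟨a, ha⟩ | hlim
      · subst h0; rwa [hg0] at hB
      · have ha' : α = a + 1 := by rw [← ha, Ordinal.add_one_eq_succ]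
        subst ha'
        have halt : a < a + 1 := by
          rw [Ordinal.add_one_eq_succ]; exact Order.lt_succ a
        have haβ : a ≤ β := le_trans halt.le hαβ
        by_cases hBa : B ∈ g a
        · exact ih a halt haβ B hBa hBA
        · have hBΓ : B ∈ Γ (g a) := (hgsucc a hαβ).2 ⟨hB, hBa⟩
          have hB𝔄 : B ∈ Γ 𝔄 := by
            refine hdep B (g a) 𝔄 ?_ ?_ hBΓ
            · ext C
              constructor
              · rintro ⟨hC, hCB⟩
                exact ⟨ih a halt haβ C hC (key B C hBA hCB.1), hCB⟩
              · rintro ⟨hC, hCB⟩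
                exact ⟨hmono a haβ hC, hCB⟩
            · rintro C ⟨hC, hCB⟩
              exact ⟨ih a halt haβ C hC (key B C hBA hCB), hCB⟩
          exact hsat ⟨hB𝔄, hBA⟩
      · rw [hglim α hαβ hlim] at hB
        obtain ⟨a, haα, hBa⟩ := Set.mem_iUnion₂.1 hB
        exact ih a haα (le_trans haα.le hαβ) B hBa hBA
  -- conclude A ∈ Γ (g β)
  refine hdep A 𝔄 (g β) ?_ ?_ hA
  · ext C
    constructor
    · rintro ⟨hC, hCA⟩; exact ⟨hmono β le_rfl hC, hCA⟩
    · rintro ⟨hC, hCA⟩; exact ⟨hinv β le_rfl C hC hCA, hCA⟩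
  · rintro C ⟨hC, hCA⟩; exact ⟨hmono β le_rfl hC, hCA⟩

/-- if `r` monotonically orders `Γ`, then every natural induction from `∅`
respecting `r` is safe; moreover any atom derivable from a structure saturated on its strict
predecessors is safely derivable. -/
theorem stmt15 (Γ : Set X → Set X) (r : X → X → Prop) (hmo : MonOrders Γ r) :
    (∀ (β : Ordinal.{u}) (f : Ordinal.{u} → Set X),
        IsNatInd Γ ∅ β f → Respects Γ β f (Prec r) → IsSafeInd Γ ∅ β f) ∧
    (∀ (𝔄 : Set X) (A : X),
        SaturatedOn Γ 𝔄 {B | Prec r B A} → A ∈ Γ 𝔄 → A ∈ SafeSet Γ 𝔄) := by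
  constructor
  · intro β f hf hresp
    refine ⟨hf, ?_⟩
    intro α hα
    refine ⟨(hf.2.1 α hα).1, ?_⟩
    intro A hA
    by_cases h : A ∈ f α
    · exact Or.inl h
    · exact Or.inr (aux_key hmo (f α) A (hresp α hα A ⟨hA, h⟩) ((hf.2.1 α hα).2 ⟨hA, h⟩))
  · exact fun 𝔄 A => aux_key hmo 𝔄 A
end
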